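/- Let ∇ be a metric connection with parallel skew torsion T (∇T=0) on a Riemannian manifold, and suppose its curvature R satisfies the first Bianchi identity ∑_{cyc(X,Y,Z)} R(X,Y,Z,V) = σ_T(X,Y,Z,V), where σ_T(X,Y,Z,V)=∑_{cyc(X,Y,Z)} g(T(X,Y),T(Z,V)). Then R has pair symmetry: R(X,Y,Z,V)=R(Z,V,X,Y). -/
import Mathlib


/-- Let R be a (0,4)-tensor, skew-symmetric in its first pair and in
its last pair of arguments, satisfying the first Bianchi identity
∑_{cyc(X,Y,Z)} R(X,Y,Z,V) = σ_T(X,Y,Z,V), where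
σ_T(X,Y,Z,V) = ∑_{cyc(X,Y,Z)} g(T(X,Y),T(Z,V)) is a 4-form (totally skew).
Then R has pair symmetry: R(X,Y,Z,V) = R(Z,V,X,Y). -/
theorem pair_symmetry_of_bianchi_with_parallel_skew_torsion
    {V : Type*} [AddCommGroup V] [Module ℝ V]
    (R : V → V → V → V → ℝ)
    (T : V → V → V)
    (g : V →ₗ[ℝ] V →ₗ[ℝ] ℝ)
    (σ : V → V → V → V → ℝ)
    (hT_skew : ∀ X Y : V, T X Y = -T Y X)
    (hσ_def : ∀ X Y Z W : V,
      σ X Y Z W = g (T X Y) (T Z W) + g (T Y Z) (T X W) + g (T Z X) (T Y W))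
    (hσ12 : ∀ X Y Z W : V, σ X Y Z W = -σ Y X Z W)
    (hσ23 : ∀ X Y Z W : V, σ X Y Z W = -σ X Z Y W)
    (hσ34 : ∀ X Y Z W : V, σ X Y Z W = -σ X Y W Z)
    (hR12 : ∀ X Y Z W : V, R X Y Z W = -R Y X Z W)
    (hR34 : ∀ X Y Z W : V, R X Y Z W = -R X Y W Z)
    (hBianchi : ∀ X Y Z W : V,
      R X Y Z W + R Y Z X W + R Z X Y W = σ X Y Z W) :
    ∀ X Y Z W : V, R X Y Z W = R Z W X Y := by
  have σpair : ∀ X Y Z W : V, σ X Y Z W = σ Z W X Y := by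
    intro X Y Z W
    have h1 := hσ12 X Y Z W
    have h2 := hσ23 Y X Z W
    have h3 := hσ12 Y Z X W
    have h4 := hσ34 Z Y X W
    have h5 := hσ23 Z Y W X
    have h6 := hσ34 Z W Y X
    linarith
  intro X Y Z W
  linarith [hBianchi X Y Z W, hBianchi Y Z W X, hBianchi Z W X Y, hBianchi W X Y Z,
    hR34 Y Z W X, hR34 X Y W Z, hR34 Z W Y X, hR34 W X Z Y,
    hR12 X Z W Y, hR34 Z X W Y, hR12 Y W X Z, hR34 W Y X Z,
    σpair X Y Z W, σpair Y Z W X]
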